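/- Let α, ε > 0 and ρ_{α,ε}(ℓ) = (1 - e^{-αℓ})/(1 - e^{-αε}). For any c₀ > 0, if 1 - e^{-αε} ≥ c₀ then there exists C > 0 (depending only on c₀) such that ∫₀^ε e^{αℓ} |∂_α ρ_{α,ε}(ℓ)|² dℓ ≤ C (α^{-3} + e^{-αε} ε² α^{-1}). -/

import Mathlib

/-!
By `(a - b)² ≤ 2a² + 2b²` and `1 - e^{-αε} ≥ c₀`, the integrand is at most
`2 c₀⁻⁴ (ℓ² e^{-αℓ} + ε² e^{-2αε} e^{αℓ})`. The first term integrates over `[0, ε]` to at most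
`∫₀^∞ ℓ² e^{-αℓ} dℓ = 2/α³`, the second to at most `ε² e^{-2αε} e^{αε}/α = ε² e^{-αε}/α`.
-/

open MeasureTheory Real

/-- `∂_α ρ_{α,ε}(ℓ)`. -/
noncomputable def rhoDerivAlpha (α ε ℓ : ℝ) : ℝ :=
  ((1 - exp (-α * ε)) ^ 2)⁻¹ *
    (ℓ * exp (-α * ℓ) * (1 - exp (-α * ε)) - (1 - exp (-α * ℓ)) * ε * exp (-α * ε))

lemma sq_mul_sub_mul_le {a b x y : ℝ} (hx : |x| ≤ 1) (hy : |y| ≤ 1) :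
    (a * x - y * b) ^ 2 ≤ 2 * (a ^ 2 + b ^ 2) := by
  have hx2 : x ^ 2 ≤ 1 := (sq_le_one_iff_abs_le_one x).mpr hx
  have hy2 : y ^ 2 ≤ 1 := (sq_le_one_iff_abs_le_one y).mpr hy
  calc (a * x - y * b) ^ 2 = (a * x + -(y * b)) ^ 2 := by ring
    _ ≤ 2 * ((a * x) ^ 2 + (-(y * b)) ^ 2) := add_sq_le
    _ = 2 * (a ^ 2 * x ^ 2 + b ^ 2 * y ^ 2) := by ring
    _ ≤ 2 * (a ^ 2 * 1 + b ^ 2 * 1) := by gcongr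
    _ = 2 * (a ^ 2 + b ^ 2) := by ring

lemma exp_mul_rhoDerivAlpha_sq_le {α ε ℓ c : ℝ} (hα : 0 ≤ α) (hℓ : 0 ≤ ℓ) (hc : 0 < c)
    (hcD : c ≤ 1 - exp (-α * ε)) :
    exp (α * ℓ) * rhoDerivAlpha α ε ℓ ^ 2 ≤
      2 / c ^ 4 * (ℓ ^ 2 * exp (-α * ℓ) + (ε * exp (-α * ε)) ^ 2 * exp (α * ℓ)) := by
  unfold rhoDerivAlpha
  set d := exp (-α * ε)
  set e := exp (-α * ℓ)
  have hee : exp (α * ℓ) * e = 1 := by rw [← exp_add]; simp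
  have he_le : e ≤ 1 := exp_le_one_iff.mpr (by nlinarith)
  have hd_pos : 0 < d := exp_pos _
  have he_pos : 0 < e := exp_pos _
  have hD : |1 - d| ≤ 1 := abs_le.mpr ⟨by linarith, by linarith⟩
  have h1e : |1 - e| ≤ 1 := abs_le.mpr ⟨by linarith, by linarith⟩
  have hnum : (ℓ * e * (1 - d) - (1 - e) * ε * d) ^ 2 ≤ 2 * ((ℓ * e) ^ 2 + (ε * d) ^ 2) := by
    calc _ = (ℓ * e * (1 - d) - (1 - e) * (ε * d)) ^ 2 := by ring
      _ ≤ _ := sq_mul_sub_mul_le hD h1e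
  set D := 1 - d
  calc exp (α * ℓ) * ((D ^ 2)⁻¹ * (ℓ * e * D - (1 - e) * ε * d)) ^ 2
      = exp (α * ℓ) * (ℓ * e * D - (1 - e) * ε * d) ^ 2 / D ^ 4 := by field_simp
    _ ≤ exp (α * ℓ) * (2 * ((ℓ * e) ^ 2 + (ε * d) ^ 2)) / c ^ 4 := by gcongr
    _ = 2 / c ^ 4 * (ℓ ^ 2 * e + (ε * d) ^ 2 * exp (α * ℓ)) := by
        linear_combination (2 / c ^ 4 * ℓ ^ 2 * e) * hee

lemma integral_sq_mul_exp_neg_mul_le {α : ℝ} (hα : 0 < α) (ε : ℝ) :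
    ∫ ℓ in (0 : ℝ)..ε, ℓ ^ 2 * exp (-α * ℓ) ≤ 2 / α ^ 3 := by
  set P : ℝ → ℝ := fun ℓ => ℓ ^ 2 / α + 2 * ℓ / α ^ 2 + 2 / α ^ 3
  have hderiv : ∀ ℓ, HasDerivAt (fun ℓ => -(P ℓ * exp (-α * ℓ))) (ℓ ^ 2 * exp (-α * ℓ)) ℓ :=
    fun ℓ => ((((((hasDerivAt_pow 2 ℓ).div_const α).fun_add
      (((hasDerivAt_id' ℓ).const_mul 2).div_const (α ^ 2))).add_const (2 / α ^ 3)).fun_mul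
      ((hasDerivAt_id' ℓ).const_mul (-α)).exp).fun_neg).congr_deriv (by field_simp; ring)
  have hP_nonneg : 0 ≤ P ε := by
    have : P ε = ((α * ε + 1) ^ 2 + 1) / α ^ 3 := by simp only [P]; field_simp; ring
    rw [this]; positivity
  rw [intervalIntegral.integral_eq_sub_of_hasDerivAt (fun ℓ _ => hderiv ℓ)
    (by apply Continuous.intervalIntegrable; fun_prop)]
  have hP0 : P 0 = 2 / α ^ 3 := by simp [P]
  simp only [mul_zero, exp_zero, mul_one, hP0]
  linarith [mul_nonneg hP_nonneg (exp_pos (-α * ε)).le]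

lemma integral_exp_mul_le {α : ℝ} (hα : 0 < α) (ε : ℝ) :
    ∫ ℓ in (0 : ℝ)..ε, exp (α * ℓ) ≤ exp (α * ε) / α := by
  rw [intervalIntegral.integral_comp_mul_left (fun x => exp x) hα.ne', integral_exp,
    mul_zero, exp_zero, smul_eq_mul, div_eq_inv_mul]
  gcongr
  linarith

/-- Bound on `∫₀^ε e^{αℓ} |∂_α ρ_{α,ε}|² dℓ` when `1 - e^{-αε} ≥ c₀`. -/
theorem deriv_alpha_bound (c0 : ℝ) (hc0 : 0 < c0) :
    ∃ C > 0, ∀ α ε : ℝ, 0 < α → 0 < ε → c0 ≤ 1 - Real.exp (-α * ε) →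
      (∫ ℓ in (0:ℝ)..ε, Real.exp (α * ℓ) *
          (((1 - Real.exp (-α * ε)) ^ 2)⁻¹ *
            (ℓ * Real.exp (-α * ℓ) * (1 - Real.exp (-α * ε)) -
              (1 - Real.exp (-α * ℓ)) * ε * Real.exp (-α * ε))) ^ 2)
        ≤ C * (α⁻¹ ^ 3 + Real.exp (-α * ε) * ε ^ 2 * α⁻¹) := by
  refine ⟨4 / c0 ^ 4, by positivity, fun α ε hα hε hc => ?_⟩
  change ∫ ℓ in (0:ℝ)..ε, exp (α * ℓ) * rhoDerivAlpha α ε ℓ ^ 2 ≤ _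
  set d := exp (-α * ε)
  have hdE : d * exp (α * ε) = 1 := by rw [← exp_add]; simp
  calc ∫ ℓ in (0:ℝ)..ε, exp (α * ℓ) * rhoDerivAlpha α ε ℓ ^ 2
      ≤ ∫ ℓ in (0:ℝ)..ε, 2 / c0 ^ 4 * (ℓ ^ 2 * exp (-α * ℓ) + (ε * d) ^ 2 * exp (α * ℓ)) := by
        refine intervalIntegral.integral_mono_on hε.le ?_ ?_
          (fun ℓ hℓ => exp_mul_rhoDerivAlpha_sq_le hα.le hℓ.1 hc0 hc)
        · apply Continuous.intervalIntegrable
          unfold rhoDerivAlpha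
          fun_prop
        · apply Continuous.intervalIntegrable
          fun_prop
    _ = 2 / c0 ^ 4 * ((∫ ℓ in (0:ℝ)..ε, ℓ ^ 2 * exp (-α * ℓ)) +
          (ε * d) ^ 2 * ∫ ℓ in (0:ℝ)..ε, exp (α * ℓ)) := by
        rw [intervalIntegral.integral_const_mul, intervalIntegral.integral_add,
          intervalIntegral.integral_const_mul] <;>
        · apply Continuous.intervalIntegrable
          fun_prop
    _ ≤ 2 / c0 ^ 4 * (2 / α ^ 3 + (ε * d) ^ 2 * (exp (α * ε) / α)) := by
        gcongr
        · exact integral_sq_mul_exp_neg_mul_le hα ε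
        · exact integral_exp_mul_le hα ε
    _ ≤ 4 / c0 ^ 4 * (α⁻¹ ^ 3 + d * ε ^ 2 * α⁻¹) := by
        have hsplit : (ε * d) ^ 2 * (exp (α * ε) / α) = d * ε ^ 2 * α⁻¹ := by
          linear_combination (ε ^ 2 * d / α) * hdE
        rw [hsplit, div_eq_mul_inv 2 (α ^ 3), ← inv_pow]
        linear_combination (by positivity : 0 ≤ 2 / c0 ^ 4 * (d * ε ^ 2 * α⁻¹))
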